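/- Let e = (v, w) be a hopeful edge of desperation k, i.e., the shortest directed path from w to d in (V, E) has length k. Then the run from o traverses e at most 2^{k+1} − 1 times (even if the run never terminates). -/

import Mathlib

/-!
Since the switches alternate, a vertex `w ≠ d` visited `c` times has sent at least `(c - 1) / 2`
of those visits along each of its two outgoing edges. Every traversal of an edge into `w` is
followed by a visit to `w`, so if the first edge of a walk from `w` to `d` is traversed at most
`t` times, edges into `w` are traversed at most `2t + 1` times. The edges into `d` are traversed
at most once, because the run stops there; induction along the walk gives `2^(k+1) - 1`.
-/

open scoped Classical

/-- A switch graph: every vertex has an even successor `s0 v` and an odd successor `s1 v`. -/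
structure SwitchGraph (V : Type) where
  s0 : V → V
  s1 : V → V

namespace SwitchGraph

variable {V : Type}

/-- The successor of `v` along the edge of parity `b` (`false` = even, `true` = odd). -/
def succ (G : SwitchGraph V) (v : V) (b : Bool) : V :=
  if b then G.s1 v else G.s0 v

/-- One step of the run: move to the currently active successor and flip the switch. -/
def step [DecidableEq V] (G : SwitchGraph V) (p : V × (V → Bool)) : V × (V → Bool) :=
  (G.succ p.1 (p.2 p.1), Function.update p.2 p.1 (!p.2 p.1))

/-- The state of the run after `n` steps, starting at `o` with all switches even,
stopping (freezing) upon reaching `d`. -/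
def run [DecidableEq V] (G : SwitchGraph V) (o d : V) (n : ℕ) : V × (V → Bool) :=
  (fun p => if p.1 = d then p else G.step p)^[n] (o, fun _ => false)

/-- The run from `o` terminates at `d`. -/
def Terminates [DecidableEq V] (G : SwitchGraph V) (o d : V) : Prop :=
  ∃ n, (G.run o d n).1 = d

/-- Number of traversals of the outgoing edge of `v` of parity `b` during
the first `N` steps of the run. -/
def traversals [DecidableEq V] (G : SwitchGraph V) (o d : V) (N : ℕ) (v : V) (b : Bool) : ℕ :=
  ((Finset.range N).filter
    (fun n => (G.run o d n).1 = v ∧ v ≠ d ∧ (G.run o d n).2 v = b)).card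

/-- Total weight on edges leaving `v`. -/
def outflow {M : Type} [AddCommMonoid M] (x : V → Bool → M) (v : V) : M :=
  x v false + x v true

/-- Total weight on edges entering `v`. -/
def inflow [Fintype V] [DecidableEq V] (G : SwitchGraph V) {M : Type} [AddCommMonoid M]
    (x : V → Bool → M) (v : V) : M :=
  ∑ u : V, ∑ b : Bool, if G.succ u b = v then x u b else 0

/-- A switching flow: flow conservation of value 1 from `o` to `d`, together with the
balancing condition `x v true ≤ x v false ≤ x v true + 1` at every vertex. -/
def IsSwitchingFlow [Fintype V] [DecidableEq V] (G : SwitchGraph V) (o d : V)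
    (x : V → Bool → ℕ) : Prop :=
  (∀ v, outflow x v + (if v = d then 1 else 0) = G.inflow x v + (if v = o then 1 else 0)) ∧
  (∀ v, x v true ≤ x v false ∧ x v false ≤ x v true + 1)

/-- The edge relation of the underlying directed graph `(V, E)`. -/
def stepRel (G : SwitchGraph V) (a b : V) : Prop :=
  G.s0 a = b ∨ G.s1 a = b

/-- A dead end: a vertex with no directed path to `d` in `(V, E)`. -/
def DeadEnd (G : SwitchGraph V) (d w : V) : Prop :=
  ¬ Relation.ReflTransGen G.stepRel w d

/-- There is a directed walk of length `k` from `w` to `d` in `(V, E)`. -/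
def Chain (G : SwitchGraph V) (w d : V) (k : ℕ) : Prop :=
  ∃ f : ℕ → V, f 0 = w ∧ f k = d ∧ ∀ i < k, G.stepRel (f i) (f (i + 1))

end SwitchGraph

open SwitchGraph

namespace SwitchGraph

theorem Chain.exists_succ {V : Type} {G : SwitchGraph V} {w d : V} {k : ℕ}
    (h : G.Chain w d (k + 1)) : ∃ b, G.Chain (G.succ w b) d k := by
  obtain ⟨f, hf0, hfk, hstep⟩ := h
  have hw : ∃ b, G.succ w b = f 1 := by
    rcases hf0 ▸ hstep 0 k.succ_pos with h | h
    exacts [⟨false, h⟩, ⟨true, h⟩]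
  obtain ⟨b, hb⟩ := hw
  exact ⟨b, fun i => f (i + 1), hb.symm, hfk, fun i hi => hstep (i + 1) (by omega)⟩

variable {V : Type} [DecidableEq V] (G : SwitchGraph V) (o d : V)

theorem run_succ (n : ℕ) :
    G.run o d (n + 1) = if (G.run o d n).1 = d then G.run o d n else G.step (G.run o d n) :=
  Function.iterate_succ_apply' _ n _

theorem run_succ_of_ne {n : ℕ} (h : (G.run o d n).1 ≠ d) :
    G.run o d (n + 1) = G.step (G.run o d n) := by
  rw [run_succ, if_neg h]

theorem run_fst_eq_of_le {n m : ℕ} (h : (G.run o d n).1 = d) (hnm : n ≤ m) :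
    (G.run o d m).1 = d := by
  induction m, hnm using Nat.le_induction with
  | base => exact h
  | succ m _ ih => rw [run_succ, if_pos ih]; exact ih

theorem run_snd_succ_of_ne {n : ℕ} {w : V} (hw : (G.run o d n).1 ≠ w) :
    (G.run o d (n + 1)).2 w = (G.run o d n).2 w := by
  rw [run_succ]
  split_ifs
  · rfl
  · exact Function.update_of_ne (Ne.symm hw) _ _

def visits (w : V) (M : ℕ) : ℕ :=
  Nat.count (fun n => (G.run o d n).1 = w) M

def traversalsTo (v w : V) (N : ℕ) : ℕ :=
  Nat.count (fun n => (G.run o d n).1 = v ∧ v ≠ d ∧ G.succ v ((G.run o d n).2 v) = w) N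

theorem visits_zero (w : V) : G.visits o d w 0 = 0 := rfl

theorem visits_succ (w : V) (M : ℕ) :
    G.visits o d w (M + 1) = G.visits o d w M + if (G.run o d M).1 = w then 1 else 0 :=
  Nat.count_succ _ M

theorem traversalsTo_succ (v w : V) (N : ℕ) :
    G.traversalsTo o d v w (N + 1) = G.traversalsTo o d v w N +
      if (G.run o d N).1 = v ∧ v ≠ d ∧ G.succ v ((G.run o d N).2 v) = w then 1 else 0 :=
  Nat.count_succ _ N

theorem traversals_eq_count (N : ℕ) (v : V) (b : Bool) :
    G.traversals o d N v b =
      Nat.count (fun n => (G.run o d n).1 = v ∧ v ≠ d ∧ (G.run o d n).2 v = b) N :=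
  (Nat.count_eq_card_filter_range _ N).symm

theorem traversals_zero (v : V) (b : Bool) : G.traversals o d 0 v b = 0 := by
  rw [traversals_eq_count, Nat.count_zero]

theorem traversals_succ (N : ℕ) (v : V) (b : Bool) :
    G.traversals o d (N + 1) v b = G.traversals o d N v b +
      if (G.run o d N).1 = v ∧ v ≠ d ∧ (G.run o d N).2 v = b then 1 else 0 := by
  rw [traversals_eq_count, traversals_eq_count, Nat.count_succ]

theorem run_snd_eq_bodd_visits {w : V} (hwd : w ≠ d) (M : ℕ) :
    (G.run o d M).2 w = (G.visits o d w M).bodd := by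
  induction M with
  | zero => rw [visits_zero]; rfl
  | succ M ih =>
    rw [visits_succ]
    by_cases hM : (G.run o d M).1 = w
    · rw [run_succ_of_ne G o d (hM ▸ hwd), if_pos hM]
      simp [step, hM, ih]
    · rw [run_snd_succ_of_ne G o d hM, if_neg hM, ih]; rfl

-- The even edge is used first, hence the rounding up for `b = false`.
theorem traversals_eq_visits_div_two {w : V} (hwd : w ≠ d) (M : ℕ) (b : Bool) :
    G.traversals o d M w b = (G.visits o d w M + (!b).toNat) / 2 := by
  induction M with
  | zero => cases b <;> simp [traversals_zero, visits_zero]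
  | succ M ih =>
    rw [traversals_succ, ih, visits_succ, run_snd_eq_bodd_visits G o d hwd]
    by_cases hM : (G.run o d M).1 = w
    · simp only [hM, hwd, true_and, if_true, ne_eq, not_false_eq_true]
      have hpar := Nat.mod_two_of_bodd (G.visits o d w M)
      generalize (G.visits o d w M).bodd = p at hpar
      cases b <;> cases p <;> simp at hpar ⊢ <;> omega
    · simp [hM]

theorem visits_le_two_mul_traversals_add_one {w : V} (hwd : w ≠ d) (M : ℕ) (b : Bool) :
    G.visits o d w M ≤ 2 * G.traversals o d M w b + 1 := by
  rw [traversals_eq_visits_div_two G o d hwd]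
  cases b <;> simp <;> omega

theorem traversalsTo_le_visits (v w : V) (N : ℕ) :
    G.traversalsTo o d v w N ≤ G.visits o d w (N + 1) := by
  rw [visits, Nat.count_succ']
  refine le_add_right (Nat.count_mono_left fun n _ ⟨hv, hvd, hw⟩ => ?_)
  rw [run_succ_of_ne G o d (hv ▸ hvd)]
  simpa [step, hv] using hw

theorem traversals_le_traversalsTo {v w : V} {b : Bool} (hb : G.succ v b = w) (N : ℕ) :
    G.traversals o d N v b ≤ G.traversalsTo o d v w N := by
  rw [traversals_eq_count]
  exact Nat.count_mono_left fun n _ ⟨hv, hvd, hs⟩ => ⟨hv, hvd, hs ▸ hb⟩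

-- The run freezes at `d`, so it enters `d` at most once.
theorem traversalsTo_dest_le_one (v : V) (N : ℕ) : G.traversalsTo o d v d N ≤ 1 := by
  have entered : ∀ {n m}, n < m → (G.run o d n).1 = v → v ≠ d →
      G.succ v ((G.run o d n).2 v) = d → (G.run o d m).1 ≠ v := by
    intro n m hnm hv hvd hs hm
    have hd : (G.run o d (n + 1)).1 = d := by
      rw [run_succ_of_ne G o d (hv ▸ hvd)]; simpa [step, hv] using hs
    exact hvd (hm ▸ run_fst_eq_of_le G o d hd hnm)
  rw [traversalsTo, Nat.count_eq_card_filter_range]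
  refine Finset.card_le_one.mpr fun a ha b hb => ?_
  simp only [Finset.mem_filter] at ha hb
  rcases lt_trichotomy a b with hab | hab | hab
  · exact absurd hb.2.1 (entered hab ha.2.1 ha.2.2.1 ha.2.2.2)
  · exact hab
  · exact absurd ha.2.1 (entered hab hb.2.1 hb.2.2.1 hb.2.2.2)

theorem traversalsTo_eq (v w : V) (N : ℕ) :
    G.traversalsTo o d v w N =
      (if G.s0 v = w then G.traversals o d N v false else 0) +
        (if G.s1 v = w then G.traversals o d N v true else 0) := by
  induction N with
  | zero => simp [traversalsTo, traversals_zero]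
  | succ N ih =>
    rw [traversalsTo_succ, ih, traversals_succ, traversals_succ]
    cases h : (G.run o d N).2 v <;> split_ifs <;> simp_all [succ] <;> omega

theorem traversalsTo_le_of_chain {w : V} {k : ℕ} (hchain : G.Chain w d k) (v : V) (N : ℕ) :
    G.traversalsTo o d v w N ≤ 2 ^ (k + 1) - 1 := by
  induction k generalizing v w N with
  | zero =>
    obtain ⟨f, hf0, hfk, -⟩ := hchain
    rw [show w = d from hf0 ▸ hfk]
    exact G.traversalsTo_dest_le_one o d v N
  | succ k ih =>
    by_cases hwd : w = d
    · rw [hwd]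
      exact (G.traversalsTo_dest_le_one o d v N).trans
        (Nat.le_sub_one_of_lt (Nat.one_lt_two_pow (by omega)))
    obtain ⟨b, hb⟩ := hchain.exists_succ
    calc G.traversalsTo o d v w N
        ≤ G.visits o d w (N + 1) := G.traversalsTo_le_visits o d v w N
      _ ≤ 2 * G.traversals o d (N + 1) w b + 1 :=
          G.visits_le_two_mul_traversals_add_one o d hwd (N + 1) b
      _ ≤ 2 * G.traversalsTo o d w (G.succ w b) (N + 1) + 1 := by
          gcongr; exact G.traversals_le_traversalsTo o d rfl (N + 1)
      _ ≤ 2 * (2 ^ (k + 1) - 1) + 1 := by gcongr; exact ih hb w (N + 1)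
      _ = 2 ^ (k + 2) - 1 := by
          have := Nat.one_le_two_pow (n := k + 1)
          rw [pow_succ 2 (k + 1)]; omega

end SwitchGraph

theorem stmt9_general {V : Type} [DecidableEq V] (G : SwitchGraph V) (o d : V)
    (v w : V) (k : ℕ)
    (hchain : G.Chain w d k) (N : ℕ) :
    (if G.s0 v = w then G.traversals o d N v false else 0) +
      (if G.s1 v = w then G.traversals o d N v true else 0) ≤ 2 ^ (k + 1) - 1 := by
  rw [← G.traversalsTo_eq o d v w N]
  exact G.traversalsTo_le_of_chain o d hchain v N

/-- A hopeful edge `(v, w)` of desperation `k` (shortest path from `w` to `d` has length `k`)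
is traversed at most `2^(k+1) - 1` times by the run. -/
theorem stmt9 {V : Type} [Fintype V] [DecidableEq V] (G : SwitchGraph V) (o d : V)
    (v w : V) (k : ℕ) (hw : G.s0 v = w ∨ G.s1 v = w)
    (hchain : G.Chain w d k) (hmin : ∀ j < k, ¬ G.Chain w d j) (N : ℕ) :
    (if G.s0 v = w then G.traversals o d N v false else 0) +
      (if G.s1 v = w then G.traversals o d N v true else 0) ≤ 2 ^ (k + 1) - 1 :=
  stmt9_general G o d v w k hchain N
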